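/- Let h : ℝ^p → ℝ ∪ {+∞} be proper, closed, and convex, and suppose h satisfies the quadratic growth condition on a set B: h(β) ≥ inf h + (κ/2) dist²(β, S) for all β ∈ B, where S = argmin h is nonempty. Then the subdifferential error bound holds on B: dist(β, S) ≤ (2/κ) dist(0, ∂h(β)) for all β ∈ B with ∂h(β) nonempty. -/

import Mathlib

/-- The convex subdifferential of an extended-real-valued function. -/
def subdiff {p : ℕ} (h : EuclideanSpace ℝ (Fin p) → EReal)
    (β : EuclideanSpace ℝ (Fin p)) : Set (EuclideanSpace ℝ (Fin p)) :=
  {s | ∀ γ : EuclideanSpace ℝ (Fin p),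
    h β + ((inner ℝ s (γ - β) : ℝ) : EReal) ≤ h γ}

/-! Quadratic growth bounds `h β` below by `min h + (κ/2) d²` with `d = dist(β, S)`, while a
subgradient `s` at `β` bounds it above by `min h + ‖s‖ dist(β, γ)` for every minimizer `γ`.
Taking the infimum over `γ` gives `(κ/2) d² ≤ ‖s‖ d`, i.e. `(κ/2) d ≤ ‖s‖`, and then the
infimum over `s` gives the error bound. -/

open Metric

theorem EReal.add_nonpos_of_add_le_of_add_le {x y : EReal} {u v : ℝ} (hx : x ≠ ⊤)
    (hx' : x ≠ ⊥) (h₁ : x + u ≤ y) (h₂ : y + v ≤ x) : u + v ≤ 0 := by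
  lift x to ℝ using ⟨hx, hx'⟩
  induction y using EReal.rec with
  | bot => exact absurd h₁ (by simpa only [not_le, ← EReal.coe_add] using EReal.bot_lt_coe _)
  | top => exact absurd h₂ (by simp)
  | coe b =>
    norm_cast at h₁ h₂
    linarith

theorem le_mul_infDist_of_forall_le_mul_dist {α : Type*} [PseudoMetricSpace α] {s : Set α}
    (hs : s.Nonempty) {x : α} {a c : ℝ} (ha : 0 ≤ a) (H : ∀ y ∈ s, c ≤ a * dist x y) :
    c ≤ a * infDist x s := by
  have : Nonempty s := hs.to_subtype
  rw [infDist_eq_iInf, Real.mul_iInf_of_nonneg ha]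
  exact le_ciInf fun y => H y y.2

section Subdiff

variable {p : ℕ} {h : EuclideanSpace ℝ (Fin p) → EReal} {β γ s : EuclideanSpace ℝ (Fin p)}

theorem le_norm_mul_dist_of_mem_subdiff {c : ℝ} (hs : s ∈ subdiff h β) (hγ : h γ ≠ ⊤)
    (hγ' : h γ ≠ ⊥) (hgrowth : h γ + (c : EReal) ≤ h β) : c ≤ ‖s‖ * dist β γ := by
  have hc : c + inner ℝ s (γ - β) ≤ 0 :=
    EReal.add_nonpos_of_add_le_of_add_le hγ hγ' hgrowth (hs γ)
  have hinner : inner ℝ s (β - γ) = -inner ℝ s (γ - β) := by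
    rw [← inner_neg_right, neg_sub]
  rw [dist_eq_norm]
  linarith [real_inner_le_norm s (β - γ)]

theorem mul_infDist_le_norm_of_mem_subdiff {S : Set (EuclideanSpace ℝ (Fin p))} {c : ℝ}
    (hSne : S.Nonempty) (hfin : ∀ γ ∈ S, h γ ≠ ⊤ ∧ h γ ≠ ⊥)
    (hgrowth : ∀ γ ∈ S, h γ + ((c * infDist β S ^ 2 : ℝ) : EReal) ≤ h β)
    (hs : s ∈ subdiff h β) : c * infDist β S ≤ ‖s‖ := by
  set d := infDist β S
  have hquad : c * d ^ 2 ≤ ‖s‖ * d :=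
    le_mul_infDist_of_forall_le_mul_dist hSne (norm_nonneg s) fun γ hγ =>
      le_norm_mul_dist_of_mem_subdiff hs (hfin γ hγ).1 (hfin γ hγ).2 (hgrowth γ hγ)
  have hd0 : 0 ≤ d := infDist_nonneg
  rcases hd0.eq_or_lt with hzero | hpos
  · rw [← hzero, mul_zero]
    exact norm_nonneg s
  · exact le_of_mul_le_mul_right (by linarith) hpos

end Subdiff

theorem quadratic_growth_error_bound_general (p : ℕ)
    (h : EuclideanSpace ℝ (Fin p) → EReal)
    (hproper : (∃ x, h x ≠ ⊤) ∧ ∀ x, h x ≠ ⊥)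
    (S : Set (EuclideanSpace ℝ (Fin p)))
    (hS : S = {x | ∀ y, h x ≤ h y}) (hSne : S.Nonempty)
    (κ : ℝ) (hκ : 0 < κ) (B : Set (EuclideanSpace ℝ (Fin p)))
    (hQG : ∀ x₀ ∈ S, ∀ β ∈ B,
      h x₀ + ((κ / 2 * (Metric.infDist β S) ^ 2 : ℝ) : EReal) ≤ h β) :
    ∀ β ∈ B, (subdiff h β).Nonempty →
      Metric.infDist β S ≤ (2 / κ) * Metric.infDist 0 (subdiff h β) := by
  obtain ⟨⟨z, hz⟩, hbot⟩ := hproper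
  have hfin : ∀ γ ∈ S, h γ ≠ ⊤ ∧ h γ ≠ ⊥ := by
    intro γ hγ
    rw [hS] at hγ
    exact ⟨ne_top_of_le_ne_top hz (hγ z), hbot γ⟩
  intro β hβ hsub
  have hbound : κ / 2 * infDist β S ≤ infDist 0 (subdiff h β) := by
    refine (le_infDist hsub).2 fun s hs => ?_
    rw [dist_zero_left]
    exact mul_infDist_le_norm_of_mem_subdiff hSne hfin (fun γ hγ => hQG γ hγ β hβ) hs
  rw [div_mul_eq_mul_div, le_div_iff₀ hκ]
  linarith

/-- Quadratic growth implies the subdifferential error bound: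
if `h(β) ≥ inf h + (κ/2) dist²(β, S)` on `B` with `S = argmin h ≠ ∅`, then
`dist(β, S) ≤ (2/κ) dist(0, ∂h(β))` on `B` wherever `∂h(β) ≠ ∅`. -/
theorem quadratic_growth_error_bound (p : ℕ)
    (h : EuclideanSpace ℝ (Fin p) → EReal)
    (hproper : (∃ x, h x ≠ ⊤) ∧ ∀ x, h x ≠ ⊥)
    (hlsc : LowerSemicontinuous h)
    (hconv : Convex ℝ {q : EuclideanSpace ℝ (Fin p) × ℝ | h q.1 ≤ (q.2 : EReal)})
    (S : Set (EuclideanSpace ℝ (Fin p)))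
    (hS : S = {x | ∀ y, h x ≤ h y}) (hSne : S.Nonempty)
    (κ : ℝ) (hκ : 0 < κ) (B : Set (EuclideanSpace ℝ (Fin p)))
    (hQG : ∀ x₀ ∈ S, ∀ β ∈ B,
      h x₀ + ((κ / 2 * (Metric.infDist β S) ^ 2 : ℝ) : EReal) ≤ h β) :
    ∀ β ∈ B, (subdiff h β).Nonempty →
      Metric.infDist β S ≤ (2 / κ) * Metric.infDist 0 (subdiff h β) :=
  quadratic_growth_error_bound_general p h hproper S hS hSne κ hκ B hQG
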